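/- (Example 3: a family of 7-dimensional real Bott manifolds without Spin structure.) Let A be any 7×7 Bott matrix (strictly upper triangular with entries in {0,1}) whose first row is (0,0,1,1,1,1,0) and whose second row is (0,0,0,0,0,1,1). Then there exists no group homomorphism ε from Γ(A) to the group of units of Cl_7 satisfying ε(s_1) ∈ {ι(e_3)ι(e_4)ι(e_5)ι(e_6), −ι(e_3)ι(e_4)ι(e_5)ι(e_6)} and ε(s_2) ∈ {ι(e_6)ι(e_7), −ι(e_6)ι(e_7)}. -/

import Mathlib

noncomputable section

open Matrix

/-- The Euclidean group `E(n)`: pairs `(M, b)` with `M ∈ O(n)`, `b ∈ ℝⁿ`,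
acting on `ℝⁿ` by `x ↦ M x + b`. -/
@[ext]
structure EuclideanGroup (n : ℕ) where
  M : Matrix.orthogonalGroup (Fin n) ℝ
  b : Fin n → ℝ

namespace EuclideanGroup

variable {n : ℕ}

instance : Mul (EuclideanGroup n) :=
  ⟨fun g h => ⟨g.M * h.M, (g.M : Matrix (Fin n) (Fin n) ℝ) *ᵥ h.b + g.b⟩⟩

instance : One (EuclideanGroup n) := ⟨⟨1, 0⟩⟩

instance : Inv (EuclideanGroup n) :=
  ⟨fun g => ⟨g.M⁻¹, -(star (g.M : Matrix (Fin n) (Fin n) ℝ) *ᵥ g.b)⟩⟩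

@[simp] theorem mul_M (g h : EuclideanGroup n) : (g * h).M = g.M * h.M := rfl
@[simp] theorem mul_b (g h : EuclideanGroup n) :
    (g * h).b = (g.M : Matrix (Fin n) (Fin n) ℝ) *ᵥ h.b + g.b := rfl
@[simp] theorem one_M : (1 : EuclideanGroup n).M = 1 := rfl
@[simp] theorem one_b : (1 : EuclideanGroup n).b = 0 := rfl
@[simp] theorem inv_M (g : EuclideanGroup n) : g⁻¹.M = g.M⁻¹ := rfl
@[simp] theorem inv_b (g : EuclideanGroup n) :
    g⁻¹.b = -(star (g.M : Matrix (Fin n) (Fin n) ℝ) *ᵥ g.b) := rfl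

instance : Group (EuclideanGroup n) where
  mul_assoc a b c :=
    EuclideanGroup.ext (mul_assoc _ _ _)
      (by simp [Matrix.mulVec_add, Matrix.mulVec_mulVec, add_assoc])
  one_mul a := by ext <;> simp
  mul_one a := by ext <;> simp
  inv_mul_cancel a :=
    EuclideanGroup.ext (inv_mul_cancel _) (by exact add_neg_cancel _)

end EuclideanGroup


/-- A Bott matrix: a strictly upper triangular binary matrix
(entries `0` or `1`, and `A i j = 0` whenever `j ≤ i`). -/
def IsBottMatrix {n : ℕ} (A : Matrix (Fin n) (Fin n) ℕ) : Prop :=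
  (∀ i j : Fin n, A i j = 0 ∨ A i j = 1) ∧ ∀ i j : Fin n, (j : ℕ) ≤ (i : ℕ) → A i j = 0

/-- The diagonal matrix `D_i` with `(k,k)`-entry `(-1) ^ (A i k)`. -/
def Dmat {n : ℕ} (A : Matrix (Fin n) (Fin n) ℕ) (i : Fin n) : Matrix (Fin n) (Fin n) ℝ :=
  Matrix.diagonal fun k => (-1 : ℝ) ^ (A i k)

theorem diagonal_pm_mem_orthogonalGroup {n : ℕ} (d : Fin n → ℝ)
    (hd : ∀ k, d k = 1 ∨ d k = -1) :
    Matrix.diagonal d ∈ Matrix.orthogonalGroup (Fin n) ℝ := by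
  rw [Matrix.mem_orthogonalGroup_iff]
  have : star (Matrix.diagonal d) = Matrix.diagonal d := by
    simp [Matrix.star_eq_conjTranspose, Matrix.diagonal_conjTranspose]
  rw [show (Matrix.diagonal d)ᵀ = Matrix.diagonal d by simp, Matrix.diagonal_mul_diagonal]
  have h1 : (fun k => d k * d k) = fun _ => (1 : ℝ) :=
    funext fun k => by rcases hd k with h | h <;> simp [h]
  rw [h1, Matrix.diagonal_one]

theorem Dmat_mem {n : ℕ} (A : Matrix (Fin n) (Fin n) ℕ) (i : Fin n) :
    Dmat A i ∈ Matrix.orthogonalGroup (Fin n) ℝ := by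
  refine diagonal_pm_mem_orthogonalGroup _ fun k => ?_
  rcases Nat.even_or_odd (A i k) with h | h
  · exact Or.inl (h.neg_one_pow)
  · exact Or.inr (h.neg_one_pow)

/-- `D_i` as an element of the orthogonal group. -/
def Dorth {n : ℕ} (A : Matrix (Fin n) (Fin n) ℕ) (i : Fin n) :
    Matrix.orthogonalGroup (Fin n) ℝ :=
  ⟨Dmat A i, Dmat_mem A i⟩

/-- The generators `s_i` of the Bieberbach group of the real Bott manifold `M(A)`:
for `i` with `i + 1 < n` (i.e. the mathematical indices `1 ≤ i ≤ n - 1`),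
`s_i = (D_i, (1/2) e_i)`, and the last generator (mathematical index `n`) is
`s_n = (I, e_n)`.  (Indices are `0`-based.) -/
def sgen {n : ℕ} (A : Matrix (Fin n) (Fin n) ℕ) (i : Fin n) : EuclideanGroup n :=
  if (i : ℕ) + 1 = n then ⟨1, Pi.single i 1⟩
  else ⟨Dorth A i, Pi.single i (1 / 2 : ℝ)⟩

/-- The fundamental group `Γ(A)` of the real Bott manifold `M(A)`, as the subgroup
of `E(n)` generated by `s_1, …, s_n`. -/
def BottGroup {n : ℕ} (A : Matrix (Fin n) (Fin n) ℕ) : Subgroup (EuclideanGroup n) :=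
  Subgroup.closure (Set.range (sgen A))

theorem sgen_mem {n : ℕ} (A : Matrix (Fin n) (Fin n) ℕ) (i : Fin n) :
    sgen A i ∈ BottGroup A :=
  Subgroup.subset_closure (Set.mem_range_self i)

/-- The homomorphism sending an affine isometry `(M, b)` to its linear part `M`. -/
def linearPart (n : ℕ) : EuclideanGroup n →* Matrix.orthogonalGroup (Fin n) ℝ where
  toFun g := g.M
  map_one' := rfl
  map_mul' _ _ := rfl

/-- The standard positive definite quadratic form `Q(x) = x₁² + ⋯ + xₙ²` on `ℝⁿ`. -/
def Qstd (n : ℕ) : QuadraticForm ℝ (Fin n → ℝ) :=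
  QuadraticMap.weightedSumSquares ℝ (fun _ : Fin n => (1 : ℝ))

/-- The Clifford algebra `Cl_n` of `Q(x) = x₁² + ⋯ + xₙ²`. -/
abbrev Cl (n : ℕ) := CliffordAlgebra (Qstd n)

/-- For a finite set `S = {s₁ < s₂ < ⋯ < s_k} ⊆ {1, …, n}`, the product
`e_S = ι(e_{s₁}) ι(e_{s₂}) ⋯ ι(e_{s_k})` in `Cl_n` (with `e_∅ = 1`). -/
def eProd {n : ℕ} (S : Finset (Fin n)) : Cl n :=
  ((S.sort (· ≤ ·)).map fun j => CliffordAlgebra.ι (Qstd n) (Pi.single j 1)).prod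


/-!
Since `a₁₂ = 0` and `A` is upper triangular, `s₁` and `s₂` commute: their linear parts are
diagonal and each fixes the other's translation vector. The prescribed images
`±ι(e₃)ι(e₄)ι(e₅)ι(e₆)` and `±ι(e₆)ι(e₇)` share exactly one basis vector, so they anticommute in
`Cl₇`. But commuting units `u, v` with `uv = -vu` satisfy `2vu = 0`, impossible over `ℝ`.
-/

theorem Units.not_semiconjBy_neg_of_commute (K : Type*) {R : Type*} [Field K] [NeZero (2 : K)]
    [Ring R] [Nontrivial R] [Module K R] [NoZeroSMulDivisors K R] {u v : Rˣ}
    (huv : Commute u v) : ¬SemiconjBy (u : R) v (-v) := by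
  intro hanti
  have hzero : (2 : K) • ((v * u : Rˣ) : R) = 0 := by
    rw [two_smul, Units.val_mul]
    nth_rewrite 1 [← huv.units_val.eq]
    rw [hanti.eq, neg_mul, neg_add_cancel]
  exact (v * u).ne_zero ((smul_eq_zero.mp hzero).resolve_left two_ne_zero)

namespace CliffordAlgebra

variable {R M : Type*} [CommRing R] [AddCommGroup M] [Module R M] {Q : QuadraticForm R M}

theorem semiconjBy_ι_neg_of_isOrtho {a b : M} (h : Q.IsOrtho a b) :
    SemiconjBy (ι Q a) (ι Q b) (-ι Q b) := by
  rw [SemiconjBy, neg_mul, ← ι_mul_ι_comm_of_isOrtho h]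

theorem commute_ι_mul_ι_of_isOrtho {a b c : M} (hca : Q.IsOrtho c a) (hcb : Q.IsOrtho c b) :
    Commute (ι Q c) (ι Q a * ι Q b) := by
  have := (semiconjBy_ι_neg_of_isOrtho hca).mul_right (semiconjBy_ι_neg_of_isOrtho hcb)
  rwa [neg_mul_neg] at this

theorem semiconjBy_ι_mul_ι_neg_of_isOrtho {a b : M} (h : Q.IsOrtho a b) :
    SemiconjBy (ι Q a) (ι Q a * ι Q b) (-(ι Q a * ι Q b)) := by
  have := SemiconjBy.mul_right (Commute.refl (ι Q a)) (semiconjBy_ι_neg_of_isOrtho h)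
  rwa [mul_neg] at this

end CliffordAlgebra

theorem Qstd_isOrtho_single {n : ℕ} {i j : Fin n} (h : i ≠ j) :
    (Qstd n).IsOrtho (Pi.single i 1) (Pi.single j 1) := by
  rw [QuadraticMap.isOrtho_def]
  simp [Qstd, QuadraticMap.weightedSumSquares_apply, Pi.single_apply, mul_add,
    Finset.sum_add_distrib, h, h.symm]

theorem sgen_of_not_last {n : ℕ} (A : Matrix (Fin n) (Fin n) ℕ) {i : Fin n}
    (hi : (i : ℕ) + 1 ≠ n) :
    sgen A i = ⟨Dorth A i, Pi.single i (1 / 2 : ℝ)⟩ :=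
  if_neg hi

theorem commute_sgen {n : ℕ} (A : Matrix (Fin n) (Fin n) ℕ) {i j : Fin n}
    (hi : (i : ℕ) + 1 ≠ n) (hj : (j : ℕ) + 1 ≠ n) (hij : A i j = 0) (hji : A j i = 0) :
    Commute (sgen A i) (sgen A j) := by
  rw [sgen_of_not_last A hi, sgen_of_not_last A hj]
  refine EuclideanGroup.ext (Subtype.ext ?_) ?_
  · exact (Matrix.commute_diagonal _ _).eq
  · change Dmat A i *ᵥ Pi.single j (1 / 2 : ℝ) + Pi.single i (1 / 2) =
      Dmat A j *ᵥ Pi.single i (1 / 2 : ℝ) + Pi.single j (1 / 2)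
    rw [Dmat, Dmat, Matrix.diagonal_mulVec_single, Matrix.diagonal_mulVec_single, hij, hji]
    simp [add_comm]

theorem IsBottMatrix.commute_sgen {n : ℕ} {A : Matrix (Fin n) (Fin n) ℕ} (hA : IsBottMatrix A)
    {i j : Fin n} (hij : i < j) (hj : (j : ℕ) + 1 ≠ n) (h : A i j = 0) :
    Commute (sgen A i) (sgen A j) :=
  _root_.commute_sgen A (by omega) hj h (hA.2 j i hij.le)

section Dim7

open CliffordAlgebra

-- Indices are 0-based: `e 2 * e 3 * e 4 * e 5` is `ι(e₃)ι(e₄)ι(e₅)ι(e₆)`.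
local notation "e" i:max => ι (Qstd 7) (Pi.single (i : Fin 7) (1 : ℝ))

theorem semiconjBy_e2345_e56_neg :
    SemiconjBy (e 2 * e 3 * e 4 * e 5) (e 5 * e 6) (-(e 5 * e 6)) := by
  have hcomm (i : Fin 7) (h5 : i ≠ 5) (h6 : i ≠ 6) : Commute (e i) (e 5 * e 6) :=
    commute_ι_mul_ι_of_isOrtho (Qstd_isOrtho_single h5) (Qstd_isOrtho_single h6)
  have h234 : Commute (e 2 * e 3 * e 4) (e 5 * e 6) :=
    ((hcomm 2 (by decide) (by decide)).mul_left (hcomm 3 (by decide) (by decide))).mul_left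
      (hcomm 4 (by decide) (by decide))
  exact SemiconjBy.mul_left h234.neg_right
    (semiconjBy_ι_mul_ι_neg_of_isOrtho (Qstd_isOrtho_single (by decide : (5 : Fin 7) ≠ 6)))

end Dim7

theorem dim7_family_no_spin_general (A : Matrix (Fin 7) (Fin 7) ℕ) (hA : IsBottMatrix A)
    (hrow1 : A 0 = ![0,0,1,1,1,1,0]) :
    ¬∃ ε : BottGroup A →* (Cl 7)ˣ,
      (((ε ⟨sgen A 0, sgen_mem A 0⟩ : (Cl 7)ˣ) : Cl 7) =
          CliffordAlgebra.ι (Qstd 7) (Pi.single 2 1) *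
            CliffordAlgebra.ι (Qstd 7) (Pi.single 3 1) *
            CliffordAlgebra.ι (Qstd 7) (Pi.single 4 1) *
            CliffordAlgebra.ι (Qstd 7) (Pi.single 5 1) ∨
        ((ε ⟨sgen A 0, sgen_mem A 0⟩ : (Cl 7)ˣ) : Cl 7) =
          -(CliffordAlgebra.ι (Qstd 7) (Pi.single 2 1) *
            CliffordAlgebra.ι (Qstd 7) (Pi.single 3 1) *
            CliffordAlgebra.ι (Qstd 7) (Pi.single 4 1) *
            CliffordAlgebra.ι (Qstd 7) (Pi.single 5 1))) ∧
      (((ε ⟨sgen A 1, sgen_mem A 1⟩ : (Cl 7)ˣ) : Cl 7) =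
          CliffordAlgebra.ι (Qstd 7) (Pi.single 5 1) *
            CliffordAlgebra.ι (Qstd 7) (Pi.single 6 1) ∨
        ((ε ⟨sgen A 1, sgen_mem A 1⟩ : (Cl 7)ˣ) : Cl 7) =
          -(CliffordAlgebra.ι (Qstd 7) (Pi.single 5 1) *
            CliffordAlgebra.ι (Qstd 7) (Pi.single 6 1))) := by
  rintro ⟨ε, h0, h1⟩
  have hs : Commute (sgen A 0) (sgen A 1) :=
    hA.commute_sgen (by decide) (by decide) (by rw [hrow1]; rfl)
  have hΓ : Commute (⟨_, sgen_mem A 0⟩ : BottGroup A) ⟨_, sgen_mem A 1⟩ := Subtype.ext hs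
  have hε := hΓ.map ε
  refine Units.not_semiconjBy_neg_of_commute ℝ hε ?_
  have key := semiconjBy_e2345_e56_neg
  rcases h0 with h0 | h0 <;> rcases h1 with h1 | h1 <;> rw [h0, h1]
  exacts [key, key.neg_right, key.neg_left, key.neg_right.neg_left]

/-- Example 3.  For any `7 × 7` Bott matrix `A` whose first row is
`(0,0,1,1,1,1,0)` and whose second row is `(0,0,0,0,0,1,1)`, the oriented real Bott
manifold `M(A)` has no Spin structure: no group homomorphism `ε : Γ(A) → Cl₇ˣ` satisfies
`ε(s₁) = ± ι(e₃) ι(e₄) ι(e₅) ι(e₆)` and `ε(s₂) = ± ι(e₆) ι(e₇)` (indices `0`-based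
below). -/
theorem dim7_family_no_spin (A : Matrix (Fin 7) (Fin 7) ℕ) (hA : IsBottMatrix A)
    (hrow1 : A 0 = ![0,0,1,1,1,1,0]) (hrow2 : A 1 = ![0,0,0,0,0,1,1]) :
    ¬∃ ε : BottGroup A →* (Cl 7)ˣ,
      (((ε ⟨sgen A 0, sgen_mem A 0⟩ : (Cl 7)ˣ) : Cl 7) =
          CliffordAlgebra.ι (Qstd 7) (Pi.single 2 1) *
            CliffordAlgebra.ι (Qstd 7) (Pi.single 3 1) *
            CliffordAlgebra.ι (Qstd 7) (Pi.single 4 1) *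
            CliffordAlgebra.ι (Qstd 7) (Pi.single 5 1) ∨
        ((ε ⟨sgen A 0, sgen_mem A 0⟩ : (Cl 7)ˣ) : Cl 7) =
          -(CliffordAlgebra.ι (Qstd 7) (Pi.single 2 1) *
            CliffordAlgebra.ι (Qstd 7) (Pi.single 3 1) *
            CliffordAlgebra.ι (Qstd 7) (Pi.single 4 1) *
            CliffordAlgebra.ι (Qstd 7) (Pi.single 5 1))) ∧
      (((ε ⟨sgen A 1, sgen_mem A 1⟩ : (Cl 7)ˣ) : Cl 7) =
          CliffordAlgebra.ι (Qstd 7) (Pi.single 5 1) *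
            CliffordAlgebra.ι (Qstd 7) (Pi.single 6 1) ∨
        ((ε ⟨sgen A 1, sgen_mem A 1⟩ : (Cl 7)ˣ) : Cl 7) =
          -(CliffordAlgebra.ι (Qstd 7) (Pi.single 5 1) *
            CliffordAlgebra.ι (Qstd 7) (Pi.single 6 1))) :=
  dim7_family_no_spin_general A hA hrow1
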